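/- arXiv:2507.02061 — 4 statements merged into one kernel-verified Lean document; each statement's English description precedes it below -/
import Mathlib

section
/- Let G be an unweighted undirected graph, let v be a vertex, and let 0 ≤ t ≤ R be integers. If the ball graph B(v,R) (the subgraph induced by all vertices at distance at most R from v together with all edges at distance at most R from v) is a tree, then no vertex at distance at most R - t from v lies on a cycle of length at most 2t in G. -/
open SimpleGraph

variable {V : Type*}

/-- The set of vertices at distance at most `r` from `u` in `G`. -/
def vball (G : SimpleGraph V) (u : V) (r : ℕ) : Set V :=
  {w | ∃ p : G.Walk u w, p.length ≤ r}

/-- The set of edges at distance at most `r` from `u` in `G`, where the distance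
from `u` to an edge is one more than the distance to its closer endpoint. -/
def eball (G : SimpleGraph V) (u : V) (r : ℕ) : Set (Sym2 V) :=
  {e | e ∈ G.edgeSet ∧ ∃ a ∈ e, ∃ p : G.Walk u a, p.length + 1 ≤ r}

/-- The ball graph `B(v,R)`: vertices at distance ≤ R from `v` together with
all edges at distance ≤ R from `v`, as a subgraph of `G`. -/
def ballSub (G : SimpleGraph V) (v : V) (R : ℕ) : G.Subgraph where
  verts := vball G v R
  Adj a b := G.Adj a b ∧
    ((∃ p : G.Walk v a, p.length + 1 ≤ R) ∨ (∃ p : G.Walk v b, p.length + 1 ≤ R))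
  adj_sub h := h.1
  edge_vert := by
    rintro a b ⟨hab, ⟨p, hp⟩ | ⟨p, hp⟩⟩
    · exact ⟨p, by omega⟩
    · exact ⟨p.concat hab.symm, by rw [SimpleGraph.Walk.length_concat]; omega⟩
  symm := by
    constructor
    rintro a b ⟨hab, h⟩
    exact ⟨hab.symm, h.symm⟩

/-- The graph `G \ {s}`: delete the vertex `s` together with its incident edges. -/
def delVert (G : SimpleGraph V) (s : V) : SimpleGraph V where
  Adj a b := G.Adj a b ∧ a ≠ s ∧ b ≠ s
  symm := by constructor; rintro a b ⟨h, ha, hb⟩; exact ⟨h.symm, hb, ha⟩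
  loopless := by constructor; rintro a ⟨h, _, _⟩; exact G.irrefl h

/-- The set of vertices at distance exactly `r` from `u` in `G`. -/
def vsphere (G : SimpleGraph V) (u : V) (r : ℕ) : Set V :=
  {w | (∃ p : G.Walk u w, p.length = r) ∧ ∀ q : G.Walk u w, r ≤ q.length}


section Helpers
variable {G : SimpleGraph V}

def liftWalk {G : SimpleGraph V} (H : G.Subgraph) :
    ∀ {a b : V} (p : G.Walk a b), (∀ e ∈ p.edges, e ∈ H.edgeSet) →
      ∀ (ha : a ∈ H.verts) (hb : b ∈ H.verts), H.coe.Walk ⟨a, ha⟩ ⟨b, hb⟩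
  | a, _, SimpleGraph.Walk.nil, _, ha, hb => SimpleGraph.Walk.nil
  | a, b, SimpleGraph.Walk.cons (v := c) hadj p, h, ha, hb => by
      have he : s(a, c) ∈ H.edgeSet := h _ (by simp)
      have hadj' : H.Adj a c := SimpleGraph.Subgraph.mem_edgeSet.1 he
      exact SimpleGraph.Walk.cons (by exact hadj' : H.coe.Adj ⟨a, ha⟩ ⟨c, H.edge_vert hadj'.symm⟩)
        (liftWalk H p (fun e he' => h e (by simp [he'])) _ hb)

lemma liftWalk_map {G : SimpleGraph V} (H : G.Subgraph) :
    ∀ {a b : V} (p : G.Walk a b) (h : ∀ e ∈ p.edges, e ∈ H.edgeSet)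
      (ha : a ∈ H.verts) (hb : b ∈ H.verts),
      (liftWalk H p h ha hb).map H.hom = p
  | a, _, SimpleGraph.Walk.nil, _, ha, hb => rfl
  | a, b, SimpleGraph.Walk.cons hadj p, h, ha, hb => by
      simp only [liftWalk, SimpleGraph.Walk.map_cons, liftWalk_map H p]
      change SimpleGraph.Walk.cons _ ((liftWalk H p _ _ hb).map H.hom) = _
      rw [liftWalk_map H p]
      rfl


lemma exists_walk_getVert : ∀ {a b : V} (p : G.Walk a b) (i : ℕ),
    ∃ q : G.Walk a (p.getVert i), q.length ≤ i
  | _, _, SimpleGraph.Walk.nil, i =>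
      ⟨(SimpleGraph.Walk.nil).copy rfl
        ((SimpleGraph.Walk.getVert_of_length_le _ (by simp)).symm), by simp⟩
  | _, _, SimpleGraph.Walk.cons h p, 0 =>
      ⟨(SimpleGraph.Walk.nil).copy rfl ((SimpleGraph.Walk.getVert_zero _).symm), by simp⟩
  | _, _, SimpleGraph.Walk.cons h p, (i+1) => by
      obtain ⟨q, hq⟩ := exists_walk_getVert p i
      exact ⟨SimpleGraph.Walk.cons h q, by simp; omega⟩

lemma exists_walk_getVert' {a b : V} (p : G.Walk a b) (i : ℕ) (hi : i ≤ p.length) :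
    ∃ q : G.Walk b (p.getVert i), q.length ≤ p.length - i := by
  have key := exists_walk_getVert p.reverse (p.length - i)
  rw [SimpleGraph.Walk.getVert_reverse] at key
  have h2 : p.length - (p.length - i) = i := by omega
  rw [h2] at key
  obtain ⟨q, hq⟩ := key
  exact ⟨q, by omega⟩

lemma mem_edges_index : ∀ {a b : V} (p : G.Walk a b) (e : Sym2 V), e ∈ p.edges →
    ∃ i, i < p.length ∧ e = s(p.getVert i, p.getVert (i+1))
  | _, _, SimpleGraph.Walk.nil, e, he => by simp at he
  | _, _, SimpleGraph.Walk.cons h p, e, he => by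
      simp only [SimpleGraph.Walk.edges_cons, List.mem_cons] at he
      rcases he with he | he
      · exact ⟨0, by simp, by simpa [SimpleGraph.Walk.getVert_cons_succ] using he⟩
      · obtain ⟨i, hi, hie⟩ := mem_edges_index p e he
        exact ⟨i+1, by simp; omega, by simpa [SimpleGraph.Walk.getVert_cons_succ] using hie⟩

end Helpers

/-- If the ball graph `B(v,R)` is a tree, then no vertex at distance at most `R - t`
from `v` lies on a cycle of length at most `2t` in `G`. -/
theorem stmt_0 [Fintype V] (G : SimpleGraph V) (v : V) (t R : ℕ) (ht : t ≤ R)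
    (htree : (ballSub G v R).coe.IsTree) :
    ∀ u ∈ vball G v (R - t), ¬ ∃ c : G.Walk u u, c.IsCycle ∧ c.length ≤ 2 * t := by
  rintro u ⟨p0, hp0⟩ ⟨c, hc, hlen⟩
  set H := ballSub G v R with hH
  have hu : u ∈ H.verts := ⟨p0, le_trans hp0 (Nat.sub_le R t)⟩
  have ht3 : 3 ≤ c.length := hc.three_le_length
  have hedges : ∀ e ∈ c.edges, e ∈ H.edgeSet := by
    intro e he
    obtain ⟨i, hi, rfl⟩ := mem_edges_index c e he
    have hadj := c.adj_getVert_succ hi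
    rw [SimpleGraph.Subgraph.mem_edgeSet]
    refine ⟨hadj, ?_⟩
    by_cases hcase : i + 1 ≤ t
    · left
      obtain ⟨q, hq⟩ := exists_walk_getVert c i
      exact ⟨p0.append q, by rw [SimpleGraph.Walk.length_append]; omega⟩
    · right
      obtain ⟨q, hq⟩ := exists_walk_getVert' c (i + 1) (by omega)
      exact ⟨p0.append q, by rw [SimpleGraph.Walk.length_append]; omega⟩
  have hc' : (liftWalk H c hedges hu hu).IsCycle := by
    rw [← SimpleGraph.Walk.map_isCycle_iff_of_injective
      (f := H.hom) (p := liftWalk H c hedges hu hu) Subtype.val_injective]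
    rw [liftWalk_map H c hedges hu hu]
    exact hc
  exact htree.IsAcyclic _ hc'
end

section
/- Let G be an unweighted undirected graph with girth greater than 2k, let s be a vertex of G, and let G' = G \ {s}. Then for any two distinct neighbors x, y of s, the sets of vertices at distance at most k−1 from x in G' and at distance at most k−1 from y in G' are disjoint. -/
open SimpleGraph

variable {V : Type*}

lemma delVert_le (G : SimpleGraph V) (s : V) : delVert G s ≤ G := fun _ _ h => h.1

lemma delVert_support_ne {G : SimpleGraph V} {s u v : V} (p : (delVert G s).Walk u v)
    (hu : u ≠ s) : s ∉ p.support := by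
  induction p with
  | nil => simpa using fun h => hu h.symm
  | cons h p ih =>
    simp only [SimpleGraph.Walk.support_cons, List.mem_cons]
    push_neg
    exact ⟨fun hh => hu hh.symm, ih h.2.2⟩

/-- If the girth of `G` exceeds `2k`, then for distinct neighbors `x, y` of `s`,
the balls of radius `k-1` around `x` and `y` in `G \ {s}` are disjoint. -/
theorem stmt_1 [Fintype V] (G : SimpleGraph V) (k : ℕ) (hk : 2 ≤ k)
    (hg : 2 * (k : ℕ∞) < G.girth) (s x y : V)
    (hx : G.Adj s x) (hy : G.Adj s y) (hxy : x ≠ y) :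
    Disjoint (vball (delVert G s) x (k - 1)) (vball (delVert G s) y (k - 1)) := by
  classical
  rw [Set.disjoint_left]
  rintro w ⟨p, hp⟩ ⟨q, hq⟩
  have hxs : x ≠ s := fun h => G.irrefl (show G.Adj s s from h ▸ hx)
  have hys : y ≠ s := fun h => G.irrefl (show G.Adj s s from h ▸ hy)
  have hsp : s ∉ p.support := delVert_support_ne p hxs
  have hsq : s ∉ q.support := delVert_support_ne q hys
  have hpe : ∀ e ∈ p.edges, e ∈ G.edgeSet := fun e he =>
    SimpleGraph.edgeSet_mono (delVert_le G s) (p.edges_subset_edgeSet he)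
  have hqe : ∀ e ∈ q.edges, e ∈ G.edgeSet := fun e he =>
    SimpleGraph.edgeSet_mono (delVert_le G s) (q.edges_subset_edgeSet he)
  set P : G.Walk x w := p.transfer G hpe with hP
  set Q : G.Walk y w := q.transfer G hqe with hQ
  set D : G.Walk x y := (P.append Q.reverse).bypass with hD
  have hDpath : D.IsPath := Walk.bypass_isPath _
  have hDlen : D.length ≤ 2 * k - 2 := by
    calc D.length ≤ (P.append Q.reverse).length := Walk.length_bypass_le _
      _ = P.length + Q.length := by
          rw [Walk.length_append, Walk.length_reverse]
      _ = p.length + q.length := by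
          rw [hP, hQ, Walk.length_transfer, Walk.length_transfer]
      _ ≤ 2 * k - 2 := by omega
  have hsD : s ∉ D.support := by
    intro hs
    have := Walk.support_bypass_subset _ hs
    rw [Walk.mem_support_append_iff] at this
    rcases this with h1 | h1
    · rw [hP, Walk.support_transfer] at h1; exact hsp h1
    · rw [Walk.support_reverse, List.mem_reverse, hQ, Walk.support_transfer] at h1
      exact hsq h1
  set C : G.Walk s s := Walk.cons hx (D.concat hy.symm) with hC
  have hCcyc : C.IsCycle := by
    rw [hC, Walk.cons_isCycle_iff]
    constructor
    · rw [← Walk.isPath_reverse_iff, Walk.reverse_concat]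
      rw [Walk.cons_isPath_iff]
      refine ⟨Walk.isPath_reverse_iff _ |>.mpr hDpath, ?_⟩
      rw [Walk.support_reverse, List.mem_reverse]
      exact hsD
    · intro he
      rw [Walk.edges_concat, List.concat_eq_append, List.mem_append] at he
      rcases he with he | he
      · exact hsD (Walk.fst_mem_support_of_mem_edges D he)
      · rw [List.mem_singleton] at he
        rcases Sym2.eq_iff.mp he with ⟨h1, h2⟩ | ⟨h1, h2⟩
        · exact hxs h2
        · exact hxy h2
  have hClen : C.length ≤ 2 * k := by
    rw [hC]
    simp only [Walk.length_cons, Walk.length_concat]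
    omega
  have hgirth : G.egirth ≤ C.length :=
    iInf_le_of_le s (iInf_le_of_le C (iInf_le _ hCcyc))
  have hEne : G.egirth ≠ ⊤ := egirth_eq_top.not.mpr (fun h => h C hCcyc)
  have hcoe : (G.girth : ℕ∞) = G.egirth := ENat.coe_toNat hEne
  have h2k : 2 * (k : ℕ∞) < G.egirth := hcoe ▸ hg
  have : (2 * k : ℕ∞) < (C.length : ℕ∞) := lt_of_lt_of_le h2k hgirth
  have : 2 * k < C.length := by exact_mod_cast this
  omega
end

section
/- Let G be a graph, let x, y be positive integers, let D ≥ 1 be a real number, and let w be a vertex. If |E_w^x| < D^x, and |E_u^y| < D^y for every vertex u, then |E_w^{x+y}| < D^{x+y}. -/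
open SimpleGraph

variable {V : Type*}

lemma walk_split (G : SimpleGraph V) {w a : V} (p : G.Walk w a) (n : ℕ) (hn : n ≤ p.length) :
    ∃ (u : V) (q : G.Walk w u) (r : G.Walk u a), q.length = n ∧ r.length = p.length - n := by
  induction p generalizing n with
  | nil =>
    simp at hn
    exact ⟨_, Walk.nil, Walk.nil, by simp [hn], by simp⟩
  | cons h p ih =>
    cases n with
    | zero => exact ⟨_, Walk.nil, Walk.cons h p, by simp, by simp⟩
    | succ m =>
      simp only [Walk.length_cons] at hn
      obtain ⟨u, q, r, hq, hr⟩ := ih m (by omega)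
      exact ⟨u, Walk.cons h q, r, by simp [hq], by simp [hr]⟩

lemma ncard_biUnion_le' {α β : Type*} [Finite β] (t : Finset α) (A : α → Set β) :
    (⋃ u ∈ t, A u).ncard ≤ ∑ u ∈ t, (A u).ncard := by
  classical
  induction t using Finset.induction with
  | empty => simp
  | insert a s hx ih =>
    rw [Finset.sum_insert hx]
    refine le_trans (le_trans (Set.ncard_le_ncard ?_ (Set.toFinite _))
      (Set.ncard_union_le (A a) (⋃ u ∈ s, A u))) (Nat.add_le_add_left ih _)
    intro z hz
    simp only [Set.mem_iUnion, Set.mem_union, Finset.mem_insert, exists_prop] at hz ⊢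
    obtain ⟨u, hu, hz⟩ := hz
    rcases hu with rfl | hu
    · exact Or.inl hz
    · exact Or.inr ⟨u, hu, hz⟩

lemma eball_cover (G : SimpleGraph V) (w : V) (x y : ℕ) (hx : 0 < x) :
    eball G w (x + y) ⊆ eball G w x ∪ ⋃ u ∈ vsphere G w x, eball G u y := by
  rintro e ⟨he, a, ha, p, hp⟩
  obtain ⟨p₀, hp₀⟩ := SimpleGraph.Reachable.exists_walk_length_eq_dist (Nonempty.intro p)
  have hle : p₀.length ≤ p.length := hp₀ ▸ G.dist_le p
  by_cases hcase : p₀.length + 1 ≤ x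
  · exact Or.inl ⟨he, a, ha, p₀, hcase⟩
  · have hxle : x ≤ p₀.length := by omega
    obtain ⟨u, q, r, hq, hr⟩ := walk_split G p₀ x hxle
    have huS : u ∈ vsphere G w x := by
      refine ⟨⟨q, hq⟩, fun q' => ?_⟩
      by_contra hlt
      push_neg at hlt
      have := G.dist_le (q'.append r)
      rw [← hp₀, Walk.length_append] at this
      omega
    refine Or.inr ?_
    simp only [Set.mem_iUnion, exists_prop]
    exact ⟨u, huS, he, a, ha, r, by omega⟩

lemma sphere_edge (G : SimpleGraph V) (w u : V) (x : ℕ) (hx : 0 < x)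
    (hu : u ∈ vsphere G w x) :
    ∃ b, G.Adj u b ∧ ∃ r : G.Walk w b, r.length + 1 = x := by
  obtain ⟨⟨q, hq⟩, _⟩ := hu
  have hnn : ¬ q.reverse.Nil := by
    rw [Walk.not_nil_iff_lt_length, Walk.length_reverse, hq]; exact hx
  obtain ⟨b, h, r, hqr⟩ := Walk.not_nil_iff.mp hnn
  refine ⟨b, h, r.reverse, ?_⟩
  have : q.reverse.length = r.length + 1 := by rw [hqr]; simp
  rw [Walk.length_reverse] at *
  omega

/-- If `|E_w^x| < D^x` and `|E_u^y| < D^y` for every vertex `u`, then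
`|E_w^{x+y}| < D^{x+y}`. -/
theorem stmt_2 [Fintype V] (G : SimpleGraph V) (x y : ℕ) (hx : 0 < x) (hy : 0 < y)
    (D : ℝ) (hD : 1 ≤ D) (w : V)
    (h1 : ((eball G w x).ncard : ℝ) < D ^ x)
    (h2 : ∀ u : V, ((eball G u y).ncard : ℝ) < D ^ y) :
    ((eball G w (x + y)).ncard : ℝ) < D ^ (x + y) := by
  classical
  set S := vsphere G w x with hS
  have hch : ∀ u : V, ∃ b : V, u ∈ S → (G.Adj u b ∧ ∃ r : G.Walk w b, r.length + 1 = x) := by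
    intro u
    by_cases hu : u ∈ S
    · obtain ⟨b, hb⟩ := sphere_edge G w u x hx hu
      exact ⟨b, fun _ => hb⟩
    · exact ⟨w, fun h => absurd h hu⟩
  choose b hb using hch
  set f : V → Sym2 V := fun u => s(u, b u) with hf
  -- f u is in both eball G w x and eball G u y
  have hfw : ∀ u ∈ S, f u ∈ eball G w x := by
    intro u hu
    obtain ⟨hadj, r, hr⟩ := hb u hu
    exact ⟨G.mem_edgeSet.mpr hadj, b u, Sym2.mem_mk_right _ _, r, by omega⟩
  have hfu : ∀ u ∈ S, f u ∈ eball G u y := by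
    intro u hu
    obtain ⟨hadj, r, hr⟩ := hb u hu
    exact ⟨G.mem_edgeSet.mpr hadj, u, Sym2.mem_mk_left _ _, Walk.nil, by simp; omega⟩
  have hinj : Set.InjOn f S := by
    intro u1 hu1 u2 hu2 heq
    simp only [hf, Sym2.eq, Sym2.rel_iff', Prod.mk.injEq, Prod.swap_prod_mk] at heq
    rcases heq with ⟨h, -⟩ | ⟨h1, h2⟩
    · exact h
    · exfalso
      obtain ⟨hadj, r, hr⟩ := hb u2 hu2
      have hw := hu1.2 (r.copy rfl h1.symm)
      rw [Walk.length_copy] at hw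
      omega
  set T : Finset V := S.toFinite.toFinset with hT
  have hTS : ∀ u, u ∈ T ↔ u ∈ S := fun u => S.toFinite.mem_toFinset
  -- sphere count bound
  have hScard : S.ncard ≤ (eball G w x).ncard :=
    Set.ncard_le_ncard_of_injOn f hfw hinj (Set.toFinite _)
  have hTcard : T.card = S.ncard := (Set.ncard_eq_toFinset_card S S.toFinite).symm
  -- the covering with the marked edge removed
  have hsub : eball G w (x + y) ⊆ eball G w x ∪ ⋃ u ∈ T, (eball G u y \ {f u}) := by
    intro e he
    rcases eball_cover G w x y hx he with h | h
    · exact Or.inl h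
    · by_cases hew : e ∈ eball G w x
      · exact Or.inl hew
      · simp only [Set.mem_iUnion, exists_prop] at h
        obtain ⟨u, hu, heu⟩ := h
        refine Or.inr (Set.mem_biUnion ((hTS u).mpr hu) ⟨heu, ?_⟩)
        simp only [Set.mem_singleton_iff]
        rintro rfl
        exact hew (hfw u hu)
  have hcount : (eball G w (x + y)).ncard ≤
      (eball G w x).ncard + ∑ u ∈ T, (eball G u y \ {f u}).ncard :=
    le_trans (Set.ncard_le_ncard hsub (Set.toFinite _))
      (le_trans (Set.ncard_union_le _ _) (Nat.add_le_add_left (ncard_biUnion_le' T _) _))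
  by_cases hTe : T = ∅
  · -- sphere empty
    rw [hTe] at hcount
    simp only [Finset.sum_empty, add_zero] at hcount
    calc ((eball G w (x + y)).ncard : ℝ) ≤ (eball G w x).ncard := by exact_mod_cast hcount
      _ < D ^ x := h1
      _ ≤ D ^ (x + y) := pow_le_pow_right₀ hD (by omega)
  · have hTne : T.Nonempty := Finset.nonempty_of_ne_empty hTe
    have hDy1 : (1:ℝ) ≤ D ^ y := one_le_pow₀ hD
    -- each term bound
    have hterm : ∀ u ∈ T, ((eball G u y \ {f u}).ncard : ℝ) < D ^ y - 1 := by
      intro u hu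
      have hmem := hfu u ((hTS u).mp hu)
      have h1le : 1 ≤ (eball G u y).ncard := (Set.ncard_pos (Set.toFinite _)).mpr ⟨_, hmem⟩
      rw [Set.ncard_diff_singleton_of_mem hmem]
      rw [Nat.cast_sub h1le]
      push_cast
      linarith [h2 u]
    have hsum : (∑ u ∈ T, ((eball G u y \ {f u}).ncard : ℝ)) < T.card * (D ^ y - 1) := by
      calc (∑ u ∈ T, ((eball G u y \ {f u}).ncard : ℝ)) < ∑ u ∈ T, (D ^ y - 1) :=
            Finset.sum_lt_sum_of_nonempty hTne hterm
        _ = T.card * (D ^ y - 1) := by rw [Finset.sum_const, nsmul_eq_mul]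
    have hEx : (0:ℝ) ≤ ((eball G w x).ncard : ℝ) := Nat.cast_nonneg _
    have hchain : ((eball G w (x + y)).ncard : ℝ) ≤
        ((eball G w x).ncard : ℝ) + ∑ u ∈ T, ((eball G u y \ {f u}).ncard : ℝ) := by
      push_cast at hcount ⊢
      exact_mod_cast hcount
    have hSle : (T.card : ℝ) ≤ ((eball G w x).ncard : ℝ) := by
      exact_mod_cast hTcard ▸ hScard
    have hfin : ((eball G w (x + y)).ncard : ℝ) < ((eball G w x).ncard : ℝ) * D ^ y := by
      have := mul_le_mul_of_nonneg_right hSle (by linarith : (0:ℝ) ≤ D ^ y - 1)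
      nlinarith
    calc ((eball G w (x + y)).ncard : ℝ) < ((eball G w x).ncard : ℝ) * D ^ y := hfin
      _ < D ^ x * D ^ y := by
          have hDy0 : (0:ℝ) < D ^ y := by linarith
          exact mul_lt_mul_of_pos_right h1 hDy0
      _ = D ^ (x + y) := (pow_add D x y).symm
end

section
/- Let G be a graph with n vertices in which every vertex has degree at least 2 + n^{1/k} for an integer k ≥ 1. Then G contains a cycle of length at most 2k. -/
open SimpleGraph

variable {V : Type*}

section Helpers
variable {G : SimpleGraph V}


lemma exists_cycle_of_two_paths {x y : V} (p q : G.Walk x y)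
    (hp : p.IsPath) (hq : q.IsPath) (hne : p ≠ q) :
    ∃ (u : V) (c : G.Walk u u), c.IsCycle ∧ c.length ≤ p.length + q.length := by
  classical
  set H : G.Subgraph := p.toSubgraph ⊔ q.toSubgraph with hH
  have key : ∀ e : Sym2 V, e ∈ H.spanningCoe.edgeSet ↔ e ∈ p.edges ∨ e ∈ q.edges := by
    intro e
    induction e using Sym2.ind with
    | _ a b =>
      rw [SimpleGraph.mem_edgeSet]
      change H.Adj a b ↔ _
      rw [hH, SimpleGraph.Subgraph.sup_adj, ← SimpleGraph.Subgraph.mem_edgeSet,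
        ← SimpleGraph.Subgraph.mem_edgeSet, Walk.mem_edges_toSubgraph, Walk.mem_edges_toSubgraph]
  have hpE : ∀ e ∈ p.edges, e ∈ H.spanningCoe.edgeSet := fun e he => (key e).2 (Or.inl he)
  have hqE : ∀ e ∈ q.edges, e ∈ H.spanningCoe.edgeSet := fun e he => (key e).2 (Or.inr he)
  set p' := p.transfer H.spanningCoe hpE with hp'def
  set q' := q.transfer H.spanningCoe hqE with hq'def
  have hne' : p' ≠ q' := by
    intro h
    apply hne
    have h2 := congrArg (fun w : H.spanningCoe.Walk x y =>
      w.transfer G (fun e he => (SimpleGraph.edgeSet_mono H.spanningCoe_le)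
        (w.edges_subset_edgeSet he))) h
    simpa only [hp'def, hq'def, Walk.transfer_transfer, Walk.transfer_self] using h2
  have hnac : ¬ H.spanningCoe.IsAcyclic := by
    rw [isAcyclic_iff_path_unique]
    push_neg
    exact ⟨x, y, ⟨p', hp.transfer hpE⟩, ⟨q', hq.transfer hqE⟩,
      fun hc => hne' (congrArg Subtype.val hc)⟩
  rw [SimpleGraph.IsAcyclic] at hnac
  push_neg at hnac
  obtain ⟨v, c, hc⟩ := hnac
  refine ⟨v, c.mapLe H.spanningCoe_le, (Walk.mapLe_isCycle _).2 hc, ?_⟩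
  have hsub : c.edges.toFinset ⊆ (p.edges ++ q.edges).toFinset := by
    intro e he
    rw [List.mem_toFinset] at he ⊢
    rw [List.mem_append]
    exact (key e).1 (c.edges_subset_edgeSet he)
  calc (c.mapLe H.spanningCoe_le).length = c.length := by simp [Walk.mapLe, Walk.length_map]
    _ = c.edges.length := (Walk.length_edges c).symm
    _ = c.edges.toFinset.card := (List.toFinset_card_of_nodup hc.edges_nodup).symm
    _ ≤ (p.edges ++ q.edges).toFinset.card := Finset.card_le_card hsub
    _ ≤ (p.edges ++ q.edges).length := (p.edges ++ q.edges).toFinset_card_le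
    _ = p.length + q.length := by simp [Walk.length_edges]

lemma no_two_close_neighbors {k : ℕ}
    (hcyc : ∀ (a : V) (c : G.Walk a a), c.IsCycle → ¬ c.length ≤ 2 * k)
    {u v w1 w2 : V} (h1 : G.Adj v w1) (h2 : G.Adj v w2) (hw : w1 ≠ w2)
    (hr1 : G.Reachable u w1) (hr2 : G.Reachable u w2)
    (hd1 : G.dist u w1 ≤ G.dist u v) (hd2 : G.dist u w2 ≤ G.dist u v)
    (hb : G.dist u w1 + G.dist u w2 + 2 ≤ 2 * k) : False := by
  classical
  obtain ⟨m1, hm1⟩ := hr1.exists_walk_length_eq_dist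
  obtain ⟨m2, hm2⟩ := hr2.exists_walk_length_eq_dist
  set p1 := m1.bypass with hp1def
  set p2 := m2.bypass with hp2def
  have hp1len : p1.length ≤ G.dist u w1 := hm1 ▸ m1.length_bypass_le
  have hp2len : p2.length ≤ G.dist u w2 := hm2 ▸ m2.length_bypass_le
  have hv1 : v ∉ p1.support := by
    intro hv
    have hlen : (p1.takeUntil v hv).length + (p1.dropUntil v hv).length = p1.length := by
      rw [← Walk.length_append, Walk.take_spec]
    have hge : G.dist u v ≤ (p1.takeUntil v hv).length := SimpleGraph.dist_le _
    have h0 : (p1.dropUntil v hv).length = 0 := by omega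
    exact G.irrefl ((Walk.eq_of_length_eq_zero h0) ▸ h1)
  have hv2 : v ∉ p2.support := by
    intro hv
    have hlen : (p2.takeUntil v hv).length + (p2.dropUntil v hv).length = p2.length := by
      rw [← Walk.length_append, Walk.take_spec]
    have hge : G.dist u v ≤ (p2.takeUntil v hv).length := SimpleGraph.dist_le _
    have h0 : (p2.dropUntil v hv).length = 0 := by omega
    exact G.irrefl ((Walk.eq_of_length_eq_zero h0) ▸ h2)
  set q1 : G.Walk u v := (Walk.cons h1 p1.reverse).reverse with hq1def
  set q2 : G.Walk u v := (Walk.cons h2 p2.reverse).reverse with hq2def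
  have hq1p : q1.IsPath := by
    rw [hq1def, Walk.isPath_reverse_iff]
    exact (m1.bypass_isPath.reverse).cons (by simpa using hv1)
  have hq2p : q2.IsPath := by
    rw [hq2def, Walk.isPath_reverse_iff]
    exact (m2.bypass_isPath.reverse).cons (by simpa using hv2)
  have hqne : q1 ≠ q2 := by
    intro h
    have h' : Walk.cons h1 p1.reverse = Walk.cons h2 p2.reverse := by
      have := congrArg Walk.reverse h
      simpa only [hq1def, hq2def, Walk.reverse_reverse] using this
    have hs := congrArg Walk.support h'
    rw [Walk.support_cons, Walk.support_cons, p1.reverse.support_eq_cons,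
      p2.reverse.support_eq_cons] at hs
    exact hw (List.cons.inj (List.cons.inj hs).2).1
  obtain ⟨a, c, hc, hclen⟩ := exists_cycle_of_two_paths q1 q2 hq1p hq2p hqne
  refine hcyc a c hc ?_
  have l1 : q1.length = p1.length + 1 := by simp [hq1def]
  have l2 : q2.length = p2.length + 1 := by simp [hq2def]
  omega

end Helpers

/-- If every vertex of `G` has degree at least `2 + n^{1/k}` where `n` is the
number of vertices, then `G` contains a cycle of length at most `2k`. -/
theorem stmt_14 [Fintype V] [Nonempty V] (G : SimpleGraph V) [DecidableRel G.Adj]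
    (k : ℕ) (hk : 1 ≤ k)
    (hdeg : ∀ v : V, (2 : ℝ) + (Fintype.card V : ℝ) ^ ((1 : ℝ) / (k : ℝ)) ≤ (G.degree v : ℝ)) :
    ∃ (u : V) (c : G.Walk u u), c.IsCycle ∧ c.length ≤ 2 * k := by
  classical
  by_contra hcon
  push_neg at hcon
  have hcyc : ∀ (a : V) (c : G.Walk a a), c.IsCycle → ¬ c.length ≤ 2 * k := by
    intro a c h hl
    have := hcon a c h
    omega
  obtain ⟨u⟩ := (inferInstance : Nonempty V)
  set n := Fintype.card V with hn
  set δ : ℝ := (n : ℝ) ^ ((1:ℝ)/(k:ℝ)) with hδ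
  have hn1 : (1:ℝ) ≤ (n:ℝ) := by exact_mod_cast Fintype.card_pos
  have hδ1 : (1:ℝ) ≤ δ := Real.one_le_rpow hn1 (by positivity)
  set S : ℕ → Finset V :=
    fun r => Finset.univ.filter (fun w => G.Reachable u w ∧ G.dist u w = r) with hS
  have dist_succ : ∀ {v w : V}, G.Reachable u v → G.Adj v w → G.dist u w ≤ G.dist u v + 1 := by
    intro v w hr h
    obtain ⟨m, hm⟩ := hr.exists_walk_length_eq_dist
    have := SimpleGraph.dist_le (m.concat h)
    rwa [Walk.length_concat, hm] at this
  have memS : ∀ {r w}, w ∈ S r ↔ (G.Reachable u w ∧ G.dist u w = r) := by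
    intro r w
    rw [hS]
    simp
  have grow : ∀ r, r + 1 ≤ k → ((S r).card : ℝ) * (1 + δ) ≤ ((S (r+1)).card : ℝ) := by
    intro r hrk
    set N : V → Finset V :=
      fun v => (G.neighborFinset v).filter (fun w => G.dist u w = r + 1) with hNdef
    have memN : ∀ {v w}, w ∈ N v ↔ (G.Adj v w ∧ G.dist u w = r + 1) := by
      intro v w
      rw [hNdef]
      simp
    have hNsub : ((S r).biUnion N) ⊆ S (r+1) := by
      intro w hw
      rw [Finset.mem_biUnion] at hw
      obtain ⟨v, hv, hwv⟩ := hw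
      rw [memS] at hv
      rw [memN] at hwv
      exact memS.2 ⟨hv.1.trans hwv.1.reachable, hwv.2⟩
    have hNdisj : ∀ v1 ∈ S r, ∀ v2 ∈ S r, v1 ≠ v2 → Disjoint (N v1) (N v2) := by
      intro v1 hv1 v2 hv2 hne
      rw [Finset.disjoint_left]
      intro w hw1 hw2
      rw [memS] at hv1 hv2
      rw [memN] at hw1 hw2
      refine no_two_close_neighbors hcyc (u := u) (v := w) hw1.1.symm hw2.1.symm hne
        hv1.1 hv2.1 ?_ ?_ ?_
      · rw [hv1.2, hw1.2]; omega
      · rw [hv2.2, hw1.2]; omega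
      · rw [hv1.2, hv2.2]; omega
    have hNcard : ∀ v ∈ S r, (1 + δ) ≤ ((N v).card : ℝ) := by
      intro v hv
      rw [memS] at hv
      have hdv := hdeg v
      have hdeg1 : 1 ≤ G.degree v := by
        by_contra hd
        push_neg at hd
        have h0 : G.degree v = 0 := by omega
        rw [h0] at hdv
        push_cast at hdv
        linarith
      set Bad : Finset V := (G.neighborFinset v).filter (fun w => ¬ G.dist u w = r + 1)
        with hBdef
      have hsplit : (N v).card + Bad.card = G.degree v := by
        rw [hNdef, hBdef, Finset.card_filter_add_card_filter_not,
          G.card_neighborFinset_eq_degree]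
      have hBad1 : Bad.card ≤ 1 := by
        rw [Finset.card_le_one]
        intro w1 hw1 w2 hw2
        by_contra hne
        rw [hBdef, Finset.mem_filter, SimpleGraph.mem_neighborFinset] at hw1 hw2
        have hr1 : G.Reachable u w1 := hv.1.trans hw1.1.reachable
        have hr2 : G.Reachable u w2 := hv.1.trans hw2.1.reachable
        have hd1 : G.dist u w1 ≤ G.dist u v := by
          have h' := dist_succ hv.1 hw1.1
          have hne1 := hw1.2
          rw [hv.2] at h' ⊢
          omega
        have hd2 : G.dist u w2 ≤ G.dist u v := by
          have h' := dist_succ hv.1 hw2.1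
          have hne2 := hw2.2
          rw [hv.2] at h' ⊢
          omega
        refine no_two_close_neighbors hcyc hw1.1 hw2.1 hne hr1 hr2 hd1 hd2 ?_
        rw [hv.2] at hd1 hd2
        omega
      have : G.degree v - 1 ≤ (N v).card := by omega
      have hc : ((G.degree v : ℝ) - 1) ≤ ((N v).card : ℝ) := by
        have h2 : ((G.degree v - 1 : ℕ) : ℝ) ≤ ((N v).card : ℝ) := by exact_mod_cast this
        rw [Nat.cast_sub hdeg1] at h2
        simpa using h2
      linarith
    calc ((S r).card : ℝ) * (1 + δ) = ∑ _v ∈ S r, (1 + δ) := by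
          rw [Finset.sum_const, nsmul_eq_mul, mul_comm]
      _ ≤ ∑ v ∈ S r, ((N v).card : ℝ) := Finset.sum_le_sum hNcard
      _ = (((S r).biUnion N).card : ℝ) := by exact_mod_cast (Finset.card_biUnion hNdisj).symm
      _ ≤ ((S (r+1)).card : ℝ) := by exact_mod_cast Finset.card_le_card hNsub
  have growth : ∀ r, r ≤ k → ((1+δ):ℝ)^r ≤ ((S r).card : ℝ) := by
    intro r
    induction r with
    | zero =>
      intro _
      have hu : u ∈ S 0 := memS.2 ⟨Reachable.refl u, SimpleGraph.dist_self⟩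
      have : 1 ≤ (S 0).card := Finset.card_pos.mpr ⟨u, hu⟩
      simpa using (by exact_mod_cast this : (1:ℝ) ≤ ((S 0).card : ℝ))
    | succ r ih =>
      intro hrk
      have h1 := ih (by omega)
      have h2 := grow r hrk
      calc ((1+δ):ℝ)^(r+1) = (1+δ)^r * (1+δ) := pow_succ _ _
        _ ≤ ((S r).card : ℝ) * (1+δ) := by
            apply mul_le_mul_of_nonneg_right h1
            linarith
        _ ≤ _ := h2
  have hkcard : ((S k).card : ℝ) ≤ (n : ℝ) := by
    have : (S k).card ≤ n := by
      rw [hS, hn]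
      exact (Finset.card_filter_le _ _).trans (le_of_eq Finset.card_univ)
    exact_mod_cast this
  have hfin := growth k le_rfl
  have hkne : (k:ℝ) ≠ 0 := by
    have : 0 < k := hk
    positivity
  have hδk : δ^k = (n:ℝ) := by
    rw [hδ, ← Real.rpow_natCast ((n:ℝ) ^ ((1:ℝ)/(k:ℝ))) k, ← Real.rpow_mul (by linarith),
      one_div, inv_mul_cancel₀ hkne, Real.rpow_one]
  have hlt : δ^k < (1+δ)^k := by
    apply pow_lt_pow_left₀ (by linarith) (by linarith)
    omega
  rw [hδk] at hlt
  linarith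
end
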